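/- Let α, β₁, β₂, γ₁, γ₂ be complex numbers with Re γ₁ > Re β₁ > 0 and Re γ₂ > Re β₂ > 0, and let A, B be real numbers with A > B > 1. Then A^{−α} · F₂(α; β₁, β₂; γ₁, γ₂; 1/A, 1 − B/A) = Γ(γ₂) (A−B)^{1−γ₂} / (Γ(β₂)Γ(γ₂−β₂)) · ∫_B^A (A−U)^{β₂−1} (U−B)^{γ₂−β₂−1} U^{−α} · ₂F₁(α, β₁; γ₁; 1/U) dU, where all complex powers of the positive real quantities A, A−B, A−U, U−B, U are principal branch powers. (Note that 1/A + |1 − B/A| = (1 + A − B)/A < 1 since B > 1, so the F₂ series converges.) -/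

import Mathlib

open Complex MeasureTheory

/-- Pochhammer symbol `(x)_n` in `ℂ`. -/
noncomputable def cpoch (x : ℂ) (n : ℕ) : ℂ := (ascPochhammer ℂ n).eval x

/-- Gauss' hypergeometric series `₂F₁`. -/
noncomputable def hyp2F1 (a b c z : ℂ) : ℂ :=
  ∑' n : ℕ, cpoch a n * cpoch b n / (cpoch c n * (n.factorial : ℂ)) * z ^ n

/-- Appell's hypergeometric series `F₂`. -/
noncomputable def appellF2 (a b₁ b₂ c₁ c₂ z₁ z₂ : ℂ) : ℂ :=
  ∑' p : ℕ × ℕ, cpoch a (p.1 + p.2) * cpoch b₁ p.1 * cpoch b₂ p.2 /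
    (cpoch c₁ p.1 * cpoch c₂ p.2 * (p.1.factorial : ℂ) * (p.2.factorial : ℂ)) *
    z₁ ^ p.1 * z₂ ^ p.2

/-!
Put `s = A - B`, `r = s / A` and substitute `U = B + s t`, so that `A - U = s (1 - t)`,
`U - B = s t` and `U = A (1 - r (1 - t))`. Expanding each `U^{-α-m}` occurring in
`U^{-α} ₂F₁(α, β₁; γ₁; 1/U)` by the binomial series in `r (1 - t)` gives a double series in
`A^{-m} (r (1 - t))^n` with coefficients `A^{-α} (α)_m (β₁)_m (α + m)_n / ((γ₁)_m m! n!)`.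
It converges absolutely because `1/A + r < 1`: with `‖α‖` in place of `α` the inner sums are
again binomial series, and what is left is a `₂F₁` series at `(1/A) / (1 - r) < 1`.
Integrating term by term against `t^{γ₂-β₂-1} (1 - t)^{β₂-1}` produces
`B(γ₂ - β₂, β₂ + n) = Γ(γ₂ - β₂) Γ(β₂) (β₂)_n / (Γ(γ₂) (γ₂)_n)`,
and `(α)_m (α + m)_n = (α)_{m+n}` reassembles Appell's series.
-/

open Set
open scoped Nat

lemma cpoch_add (x : ℂ) (m n : ℕ) : cpoch x (m + n) = cpoch x m * cpoch (x + m) n := by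
  simp [cpoch, ← ascPochhammer_mul]

lemma cpoch_ne_zero_of_re_pos {x : ℂ} (hx : 0 < x.re) (n : ℕ) : cpoch x n ≠ 0 := by
  rw [cpoch, Ne, ascPochhammer_eval_eq_zero_iff]
  rintro ⟨k, -, hk⟩
  have : (k : ℝ) = -x.re := by simpa using congrArg re hk
  linarith [k.cast_nonneg (α := ℝ)]

lemma norm_cpoch_le {x : ℂ} {r : ℝ} (h : ‖x‖ ≤ r) (n : ℕ) :
    ‖cpoch x n‖ ≤ (ascPochhammer ℝ n).eval r := by
  induction n with
  | zero => simp [cpoch]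
  | succ n ih =>
    rw [cpoch, ascPochhammer_succ_eval, ascPochhammer_succ_eval, norm_mul]
    have hxn : ‖x + n‖ ≤ r + n := (norm_add_le _ _).trans (by simpa using h)
    exact mul_le_mul ih hxn (norm_nonneg _) ((norm_nonneg _).trans ih)

lemma Gamma_add_nat_eq_cpoch_mul (x : ℂ) (hx : 0 < x.re) (n : ℕ) :
    Gamma (x + n) = cpoch x n * Gamma x := by
  rw [cpoch, ← Gamma_add_nat_div_Gamma_eq, div_mul_cancel₀ _ (Gamma_ne_zero_of_re_pos hx)]
  rintro k rfl
  rw [neg_re, natCast_re] at hx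
  linarith [k.cast_nonneg (α := ℝ)]

lemma Ring.choose_add_sub_one_eq_ascPochhammer_div {R : Type*} [Field R] [CharZero R]
    (a : R) (n : ℕ) : Ring.choose (a + n - 1) n = (ascPochhammer R n).eval a / n ! := by
  rw [Ring.choose_eq_smul, Polynomial.descPochhammer_smeval_eq_ascPochhammer,
    Polynomial.ascPochhammer_smeval_eq_eval, smul_eq_mul, div_eq_inv_mul]
  ring_nf

lemma hasSum_cpoch_div_factorial_mul_pow (a : ℂ) {z : ℂ} (hz : ‖z‖ < 1) :
    HasSum (fun n => cpoch a n / n ! * z ^ n) ((1 - z) ^ (-a)) := by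
  have := (one_div_one_sub_cpow_hasFPowerSeriesOnBall_zero a).hasSum
    (y := z) (by simpa [enorm_eq_nnnorm, ← NNReal.coe_lt_one] using hz)
  simpa [FormalMultilinearSeries.ofScalars_apply_eq, Ring.choose_add_sub_one_eq_ascPochhammer_div,
    cpoch, cpow_neg, mul_comm] using this

lemma hasSum_ascPochhammer_div_factorial_mul_pow (a : ℝ) {x : ℝ} (hx : |x| < 1) :
    HasSum (fun n => (ascPochhammer ℝ n).eval a / n ! * x ^ n) ((1 - x) ^ (-a)) := by
  have := (Real.one_div_one_sub_rpow_hasFPowerSeriesOnBall_zero a).hasSum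
    (y := x) (by simpa [enorm_eq_nnnorm, ← NNReal.coe_lt_one] using hx)
  simpa [FormalMultilinearSeries.ofScalars_apply_eq, Ring.choose_add_sub_one_eq_ascPochhammer_div,
    Real.rpow_neg (by linarith [abs_lt.mp hx] : 0 ≤ 1 - x), mul_comm] using this

lemma norm_cpoch_div_factorial_mul_pow_le {a : ℂ} {r ρ : ℝ} (ha : ‖a‖ ≤ r) (hρ : 0 ≤ ρ)
    (n : ℕ) : ‖cpoch a n‖ / n ! * ρ ^ n ≤ (ascPochhammer ℝ n).eval r / n ! * ρ ^ n := by
  gcongr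
  exact norm_cpoch_le ha n

lemma summable_norm_cpoch_div_factorial_mul_pow (a : ℂ) {ρ : ℝ} (hρ0 : 0 ≤ ρ) (hρ1 : ρ < 1) :
    Summable fun n => ‖cpoch a n‖ / n ! * ρ ^ n :=
  (hasSum_ascPochhammer_div_factorial_mul_pow ‖a‖ (by rwa [abs_of_nonneg hρ0])).summable
    |>.of_nonneg_of_le (fun n => by positivity) (norm_cpoch_div_factorial_mul_pow_le le_rfl hρ0)

lemma tsum_norm_cpoch_div_factorial_mul_pow_le {a : ℂ} {r ρ : ℝ} (ha : ‖a‖ ≤ r) (hρ0 : 0 ≤ ρ)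
    (hρ1 : ρ < 1) : ∑' n, ‖cpoch a n‖ / n ! * ρ ^ n ≤ (1 - ρ) ^ (-r) :=
  hasSum_le (norm_cpoch_div_factorial_mul_pow_le ha hρ0)
    (summable_norm_cpoch_div_factorial_mul_pow a hρ0 hρ1).hasSum
    (hasSum_ascPochhammer_div_factorial_mul_pow r (by rwa [abs_of_nonneg hρ0]))

noncomputable def gaussCoeff (a b c : ℂ) (n : ℕ) : ℂ :=
  cpoch a n * cpoch b n / (cpoch c n * n !)

lemma hyp2F1_eq_tsum (a b c z : ℂ) : hyp2F1 a b c z = ∑' n, gaussCoeff a b c n * z ^ n := rfl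

lemma gaussCoeff_eq_ordinaryHypergeometricCoefficient (a b c : ℂ) (n : ℕ) :
    gaussCoeff a b c n = ordinaryHypergeometricCoefficient a b c n := by
  rw [gaussCoeff, cpoch, cpoch, cpoch]
  ring

lemma one_le_radius_ordinaryHypergeometricSeries {𝕂 : Type*} [RCLike 𝕂] (a b c : 𝕂) :
    1 ≤ (ordinaryHypergeometricSeries 𝕂 a b c).radius := by
  by_cases habc : ∀ k : ℕ, (k : 𝕂) ≠ -a ∧ (k : 𝕂) ≠ -b ∧ (k : 𝕂) ≠ -c
  · rw [ordinaryHypergeometricSeries_radius_eq_one 𝕂 a b c habc]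
  simp only [not_forall, not_and_or, not_not] at habc
  obtain ⟨k, hk | hk | hk⟩ := habc
  · rw [neg_eq_iff_eq_neg.mp hk.symm, ordinaryHypergeometric_radius_top_of_neg_nat₁]; exact le_top
  · rw [neg_eq_iff_eq_neg.mp hk.symm, ordinaryHypergeometric_radius_top_of_neg_nat₂]; exact le_top
  · rw [neg_eq_iff_eq_neg.mp hk.symm, ordinaryHypergeometric_radius_top_of_neg_nat₃]; exact le_top

lemma summable_norm_gaussCoeff_mul_pow (a b c : ℂ) {x : ℝ} (hx0 : 0 ≤ x) (hx1 : x < 1) :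
    Summable fun n => ‖gaussCoeff a b c n‖ * x ^ n := by
  lift x to NNReal using hx0
  have := (ordinaryHypergeometricSeries ℂ a b c).summable_norm_mul_pow
    ((ENNReal.coe_lt_one_iff.mpr hx1).trans_le (one_le_radius_ordinaryHypergeometricSeries a b c))
  simpa [ordinaryHypergeometricSeries, FormalMultilinearSeries.ofScalars_norm,
    gaussCoeff_eq_ordinaryHypergeometricCoefficient] using this

noncomputable def hyp2F1BinomialTerm (a b c x y : ℂ) (p : ℕ × ℕ) : ℂ :=
  gaussCoeff a b c p.1 * x ^ p.1 * (cpoch (a + p.1) p.2 / p.2 ! * y ^ p.2)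

lemma summable_norm_hyp2F1BinomialTerm (a b c : ℂ) {x y : ℂ} (hxy : ‖x‖ + ‖y‖ < 1) :
    Summable fun p => ‖hyp2F1BinomialTerm a b c x y p‖ := by
  have hnorm (m n : ℕ) : ‖hyp2F1BinomialTerm a b c x y (m, n)‖ =
      ‖gaussCoeff a b c m‖ * ‖x‖ ^ m * (‖cpoch (a + m) n‖ / n ! * ‖y‖ ^ n) := by
    rw [hyp2F1BinomialTerm, norm_mul, norm_mul, norm_mul, norm_div, norm_pow, norm_pow,
      Complex.norm_natCast]
  have hy : ‖y‖ < 1 := by linarith [norm_nonneg x]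
  have hy1 : 0 < 1 - ‖y‖ := by linarith
  refine (summable_prod_of_nonneg fun _ => norm_nonneg _).mpr ⟨fun m => ?_, ?_⟩
  · simp_rw [hnorm]
    exact (summable_norm_cpoch_div_factorial_mul_pow (a + m) (norm_nonneg y) hy).mul_left _
  refine Summable.of_nonneg_of_le (fun m => tsum_nonneg fun n => norm_nonneg _) (fun m => ?_)
    ((summable_norm_gaussCoeff_mul_pow a b c (x := ‖x‖ / (1 - ‖y‖)) (by positivity)
      (by rw [div_lt_one hy1]; linarith)).mul_left ((1 - ‖y‖) ^ (-‖a‖)))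
  calc ∑' n, ‖hyp2F1BinomialTerm a b c x y (m, n)‖
      = ‖gaussCoeff a b c m‖ * ‖x‖ ^ m * ∑' n, ‖cpoch (a + m) n‖ / n ! * ‖y‖ ^ n := by
        simp_rw [hnorm]
        exact tsum_mul_left
    _ ≤ ‖gaussCoeff a b c m‖ * ‖x‖ ^ m * (1 - ‖y‖) ^ (-(‖a‖ + m)) := by
        gcongr
        exact tsum_norm_cpoch_div_factorial_mul_pow_le ((norm_add_le _ _).trans (by simp))
          (norm_nonneg y) hy
    _ = (1 - ‖y‖) ^ (-‖a‖) * (‖gaussCoeff a b c m‖ * (‖x‖ / (1 - ‖y‖)) ^ m) := by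
        rw [neg_add, Real.rpow_add hy1, Real.rpow_neg hy1.le, Real.rpow_neg hy1.le,
          Real.rpow_natCast, div_pow]
        ring

lemma tsum_hyp2F1BinomialTerm (a b c : ℂ) {x y : ℂ} (hxy : ‖x‖ + ‖y‖ < 1) :
    ∑' p, hyp2F1BinomialTerm a b c x y p = (1 - y) ^ (-a) * hyp2F1 a b c (x / (1 - y)) := by
  have hy : ‖y‖ < 1 := by linarith [norm_nonneg x]
  have hy0 : 1 - y ≠ 0 := sub_ne_zero.mpr fun h => by simp [← h] at hy
  have hsum := (summable_norm_hyp2F1BinomialTerm a b c hxy).of_norm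
  have hinner (m : ℕ) : HasSum (fun n => hyp2F1BinomialTerm a b c x y (m, n))
      (gaussCoeff a b c m * x ^ m * (1 - y) ^ (-(a + m))) := by
    simpa only [hyp2F1BinomialTerm] using
      (hasSum_cpoch_div_factorial_mul_pow (a + m) hy).mul_left (gaussCoeff a b c m * x ^ m)
  rw [hsum.tsum_prod' fun m => (hinner m).summable, hyp2F1_eq_tsum, ← tsum_mul_left]
  refine tsum_congr fun m => ?_
  rw [(hinner m).tsum_eq, neg_add, cpow_add _ _ hy0, cpow_neg _ (m : ℂ), cpow_natCast, div_pow]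
  field_simp

lemma hyp2F1BinomialTerm_mul_right (a b c x y z : ℂ) (p : ℕ × ℕ) :
    hyp2F1BinomialTerm a b c x (y * z) p = hyp2F1BinomialTerm a b c x y p * z ^ p.2 := by
  rw [hyp2F1BinomialTerm, hyp2F1BinomialTerm, mul_pow]
  ring

lemma cpow_neg_mul_hyp2F1_one_div_eq_tsum (α β γ : ℂ) {A y : ℝ} (hA : 0 < A)
    (hAy : 1 / A + |y| < 1) :
    ((A * (1 - y) : ℝ) : ℂ) ^ (-α) * hyp2F1 α β γ (1 / ((A * (1 - y) : ℝ) : ℂ)) =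
      (A : ℂ) ^ (-α) * ∑' p, hyp2F1BinomialTerm α β γ (1 / A) y p := by
  have hy : 0 < 1 - y := by linarith [le_abs_self y, one_div_pos.mpr hA]
  have hnorm : ‖(1 / A : ℂ)‖ + ‖(y : ℂ)‖ < 1 := by simpa [abs_of_pos hA] using hAy
  rw [tsum_hyp2F1BinomialTerm α β γ hnorm, ofReal_mul, mul_cpow_ofReal_nonneg hA.le hy.le,
    ofReal_sub, ofReal_one, div_div, mul_assoc]

lemma betaIntegral_add_nat {u v : ℂ} (hu : 0 < u.re) (hv : 0 < v.re) (n : ℕ) :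
    betaIntegral u (v + n) = Gamma u * Gamma v / Gamma (u + v) * (cpoch v n / cpoch (u + v) n) := by
  have hvn : 0 < (v + n).re := by rw [add_re, natCast_re]; positivity
  have huv : 0 < (u + v).re := by rw [add_re]; positivity
  have h := Gamma_mul_Gamma_eq_betaIntegral hu hvn
  rw [← add_assoc, Gamma_add_nat_eq_cpoch_mul v hv, Gamma_add_nat_eq_cpoch_mul (u + v) huv] at h
  have := Gamma_ne_zero_of_re_pos huv
  have := cpoch_ne_zero_of_re_pos huv n
  field_simp
  linear_combination -h

lemma setIntegral_Ioo_zero_one_eq_betaIntegral (u v : ℂ) :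
    ∫ t in Ioo (0 : ℝ) 1, (t : ℂ) ^ (u - 1) * (1 - (t : ℂ)) ^ (v - 1) = betaIntegral u v := by
  rw [betaIntegral, intervalIntegral.integral_of_le zero_le_one, integral_Ioc_eq_integral_Ioo]

lemma setIntegral_mul_tsum_eq_tsum_betaIntegral {ι : Type*} [Countable ι] {u v : ℂ}
    (hu : 0 < u.re) (hv : 0 < v.re) {E : ι → ℂ} (hE : Summable fun i => ‖E i‖) (k : ι → ℕ) :
    ∫ t in Ioo (0 : ℝ) 1, (t : ℂ) ^ (u - 1) * (1 - (t : ℂ)) ^ (v - 1) *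
        ∑' i, E i * (1 - (t : ℂ)) ^ (k i) =
      ∑' i, E i * betaIntegral u (v + k i) := by
  set w : ℝ → ℂ := fun t => (t : ℂ) ^ (u - 1) * (1 - (t : ℂ)) ^ (v - 1)
  set F : ι → ℝ → ℂ := fun i t => E i * (w t * (1 - (t : ℂ)) ^ (k i))
  have hvk (i : ι) : 0 < (v + k i).re := by rw [add_re, natCast_re]; positivity
  have hF (i : ι) : EqOn (F i)
      (fun t => E i * ((t : ℂ) ^ (u - 1) * (1 - (t : ℂ)) ^ (v + k i - 1))) (Ioo 0 1) := by
    intro t ht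
    have h1t : 1 - (t : ℂ) ≠ 0 := by
      rw [← ofReal_one, ← ofReal_sub, ofReal_ne_zero]; linarith [ht.2]
    simp only [F, w]
    rw [show v + k i - 1 = (v - 1) + k i by ring, cpow_add _ _ h1t, cpow_natCast]
    ring
  have hw : IntegrableOn w (Ioo 0 1) :=
    ((intervalIntegrable_iff_integrableOn_Ioc_of_le zero_le_one).mp
      (betaIntegral_convergent hu hv)).mono_set Ioo_subset_Ioc_self
  have hFint (i : ι) : IntegrableOn (F i) (Ioo 0 1) :=
    IntegrableOn.congr_fun (((intervalIntegrable_iff_integrableOn_Ioc_of_le zero_le_one).mp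
      (betaIntegral_convergent hu (hvk i))).mono_set Ioo_subset_Ioc_self |>.const_mul (E i))
      (hF i).symm measurableSet_Ioo
  have hFnorm (i : ι) : ∫ t in Ioo (0 : ℝ) 1, ‖F i t‖ ≤ ‖E i‖ * ∫ t in Ioo (0 : ℝ) 1, ‖w t‖ := by
    rw [← integral_const_mul]
    refine setIntegral_mono_on (hFint i).norm (hw.norm.const_mul _) measurableSet_Ioo
      fun t ht => ?_
    have : ‖(1 - (t : ℂ)) ^ k i‖ ≤ 1 := by
      rw [norm_pow]
      refine pow_le_one₀ (norm_nonneg _) ?_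
      rw [← ofReal_one, ← ofReal_sub, norm_real, Real.norm_of_nonneg] <;> linarith [ht.1, ht.2]
    simp only [F, norm_mul]
    exact mul_le_mul_of_nonneg_left (mul_le_of_le_one_right (norm_nonneg _) this) (norm_nonneg _)
  have hsum : Summable fun i => ∫ t in Ioo (0 : ℝ) 1, ‖F i t‖ :=
    (hE.mul_right _).of_nonneg_of_le (fun i => integral_nonneg fun t => norm_nonneg _) hFnorm
  calc ∫ t in Ioo (0 : ℝ) 1, w t * ∑' i, E i * (1 - (t : ℂ)) ^ (k i)
      = ∫ t in Ioo (0 : ℝ) 1, ∑' i, F i t := by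
        congr 1 with t
        rw [← tsum_mul_left]
        exact tsum_congr fun i => by simp only [F]; ring
    _ = ∑' i, ∫ t in Ioo (0 : ℝ) 1, F i t :=
        (integral_tsum_of_summable_integral_norm hFint hsum).symm
    _ = ∑' i, E i * betaIntegral u (v + k i) := tsum_congr fun i => by
        rw [setIntegral_congr_fun measurableSet_Ioo (hF i), integral_const_mul,
          setIntegral_Ioo_zero_one_eq_betaIntegral]

lemma hyp2F1BinomialTerm_mul_betaIntegral {a b c u v x y : ℂ} (hu : 0 < u.re) (hv : 0 < v.re)
    (p : ℕ × ℕ) :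
    hyp2F1BinomialTerm a b c x y p * betaIntegral u (v + p.2) =
      Gamma u * Gamma v / Gamma (u + v) *
        (cpoch a (p.1 + p.2) * cpoch b p.1 * cpoch v p.2 /
          (cpoch c p.1 * cpoch (u + v) p.2 * (p.1.factorial : ℂ) * (p.2.factorial : ℂ)) *
          x ^ p.1 * y ^ p.2) := by
  rw [hyp2F1BinomialTerm, gaussCoeff, betaIntegral_add_nat hu hv, cpoch_add]
  ring

lemma setIntegral_mul_hyp2F1_eq_appellF2 (α β γ : ℂ) {u v : ℂ} (hu : 0 < u.re) (hv : 0 < v.re)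
    {A r : ℝ} (hA : 0 < A) (hAr : 1 / A + |r| < 1) :
    ∫ t in Ioo (0 : ℝ) 1, (t : ℂ) ^ (u - 1) * (1 - (t : ℂ)) ^ (v - 1) *
        (((A * (1 - r * (1 - t)) : ℝ) : ℂ) ^ (-α) *
          hyp2F1 α β γ (1 / ((A * (1 - r * (1 - t)) : ℝ) : ℂ))) =
      Gamma u * Gamma v / Gamma (u + v) *
        ((A : ℂ) ^ (-α) * appellF2 α β v γ (u + v) (1 / A) r) := by
  have hexp : ∀ t ∈ Ioo (0 : ℝ) 1,
      (t : ℂ) ^ (u - 1) * (1 - (t : ℂ)) ^ (v - 1) *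
        (((A * (1 - r * (1 - t)) : ℝ) : ℂ) ^ (-α) *
          hyp2F1 α β γ (1 / ((A * (1 - r * (1 - t)) : ℝ) : ℂ))) =
      (A : ℂ) ^ (-α) * ((t : ℂ) ^ (u - 1) * (1 - (t : ℂ)) ^ (v - 1) *
        ∑' p, hyp2F1BinomialTerm α β γ (1 / A) r p * (1 - (t : ℂ)) ^ p.2) := by
    intro t ht
    have hrt : |r * (1 - t)| ≤ |r| := by
      rw [abs_mul, abs_of_pos (by linarith [ht.2] : 0 < 1 - t)]
      exact mul_le_of_le_one_right (abs_nonneg r) (by linarith [ht.1])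
    rw [cpow_neg_mul_hyp2F1_one_div_eq_tsum α β γ hA (by linarith)]
    simp only [ofReal_mul, ofReal_sub, ofReal_one, hyp2F1BinomialTerm_mul_right]
    ring
  rw [setIntegral_congr_fun measurableSet_Ioo hexp, integral_const_mul,
    setIntegral_mul_tsum_eq_tsum_betaIntegral hu hv
      (summable_norm_hyp2F1BinomialTerm α β γ (by simpa [abs_of_pos hA] using hAr)) Prod.snd,
    appellF2, ← tsum_mul_left, ← tsum_mul_left, ← tsum_mul_left]
  exact tsum_congr fun p => by rw [hyp2F1BinomialTerm_mul_betaIntegral hu hv]; ring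

lemma setIntegral_Ioo_eq_smul_setIntegral_Ioo_zero_one {E : Type*} [NormedAddCommGroup E]
    [NormedSpace ℝ E] (f : ℝ → E) {a b : ℝ} (hab : a < b) :
    ∫ x in Ioo a b, f x = (b - a) • ∫ t in Ioo (0 : ℝ) 1, f ((b - a) * t + a) := by
  have hs : b - a ≠ 0 := sub_ne_zero.mpr hab.ne'
  have h := intervalIntegral.integral_comp_mul_add (a := 0) (b := 1) f hs a
  rw [mul_zero, zero_add, mul_one, sub_add_cancel] at h
  rw [← integral_Ioc_eq_integral_Ioo, ← intervalIntegral.integral_of_le hab.le,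
    ← integral_Ioc_eq_integral_Ioo, ← intervalIntegral.integral_of_le zero_le_one, h,
    smul_smul, mul_inv_cancel₀ hs, one_smul]

lemma setIntegral_Ioo_sub_cpow_mul_sub_cpow (u v : ℂ) (g : ℝ → ℂ) {A B : ℝ} (hBA : B < A) :
    ∫ U in Ioo B A, ((A : ℂ) - (U : ℂ)) ^ (v - 1) * ((U : ℂ) - (B : ℂ)) ^ (u - 1) * g U =
      ((A - B : ℝ) : ℂ) ^ (u + v - 1) * ∫ t in Ioo (0 : ℝ) 1,
        (t : ℂ) ^ (u - 1) * (1 - (t : ℂ)) ^ (v - 1) * g ((A - B) * t + B) := by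
  set s : ℝ := A - B
  have hs : 0 < s := sub_pos.mpr hBA
  have hs0 : (s : ℂ) ≠ 0 := ofReal_ne_zero.mpr hs.ne'
  have hpt : EqOn (fun t : ℝ => ((A : ℂ) - ((s * t + B : ℝ) : ℂ)) ^ (v - 1) *
        (((s * t + B : ℝ) : ℂ) - (B : ℂ)) ^ (u - 1) * g (s * t + B))
      (fun t : ℝ => (s : ℂ) ^ (v - 1) * (s : ℂ) ^ (u - 1) *
        ((t : ℂ) ^ (u - 1) * (1 - (t : ℂ)) ^ (v - 1) * g (s * t + B))) (Ioo 0 1) := by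
    intro t ht
    have h1 : (A : ℂ) - ((s * t + B : ℝ) : ℂ) = (s : ℂ) * ((1 - t : ℝ) : ℂ) := by
      simp only [s]; push_cast; ring
    have h2 : ((s * t + B : ℝ) : ℂ) - B = (s : ℂ) * (t : ℂ) := by
      push_cast; ring
    simp only
    rw [h1, h2, mul_cpow_ofReal_nonneg hs.le (by linarith [ht.2]),
      mul_cpow_ofReal_nonneg hs.le ht.1.le]
    push_cast
    ring
  rw [setIntegral_Ioo_eq_smul_setIntegral_Ioo_zero_one _ hBA, real_smul,
    setIntegral_congr_fun measurableSet_Ioo hpt, integral_const_mul, ← mul_assoc, ← mul_assoc,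
    show u + v - 1 = 1 + (v - 1) + (u - 1) by ring, cpow_add _ _ hs0, cpow_add _ _ hs0, cpow_one]

theorem statement1_general (α β₁ β₂ γ₁ γ₂ : ℂ) (A B : ℝ)
    (hβ₂ : 0 < β₂.re) (hγ₂ : β₂.re < γ₂.re)
    (hB : 1 < B) (hAB : B < A) :
    (A : ℂ) ^ (-α) *
      appellF2 α β₁ β₂ γ₁ γ₂ (1 / (A : ℂ)) (1 - (B : ℂ) / (A : ℂ)) =
    Complex.Gamma γ₂ * ((A : ℂ) - (B : ℂ)) ^ (1 - γ₂) /
      (Complex.Gamma β₂ * Complex.Gamma (γ₂ - β₂)) *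
    ∫ U in Set.Ioo B A,
      ((A : ℂ) - (U : ℂ)) ^ (β₂ - 1) * ((U : ℂ) - (B : ℂ)) ^ (γ₂ - β₂ - 1) *
      (U : ℂ) ^ (-α) * hyp2F1 α β₁ γ₁ (1 / (U : ℂ)) := by
  have hA : 0 < A := by linarith
  have hs : 0 < A - B := sub_pos.mpr hAB
  have hu : 0 < (γ₂ - β₂).re := by rw [sub_re]; linarith
  have hr : 1 / A + |(A - B) / A| < 1 := by
    rw [abs_of_pos (div_pos hs hA), ← add_div, div_lt_one hA]; linarith
  have hU (t : ℝ) : (A - B) * t + B = A * (1 - (A - B) / A * (1 - t)) := by field_simp; ring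
  have hsub := setIntegral_Ioo_sub_cpow_mul_sub_cpow (γ₂ - β₂) β₂
    (fun U : ℝ => (U : ℂ) ^ (-α) * hyp2F1 α β₁ γ₁ (1 / (U : ℂ))) hAB
  simp only [hU] at hsub
  rw [setIntegral_mul_hyp2F1_eq_appellF2 α β₁ γ₁ hu hβ₂ hA hr, sub_add_cancel] at hsub
  simp only [mul_assoc _ _ (hyp2F1 _ _ _ _)]
  rw [hsub]
  have hz : (((A - B) / A : ℝ) : ℂ) = 1 - (B : ℂ) / (A : ℂ) := by
    push_cast
    rw [sub_div, div_self (ofReal_ne_zero.mpr hA.ne')]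
  have hpow : ((A : ℂ) - (B : ℂ)) ^ (1 - γ₂) * ((A - B : ℝ) : ℂ) ^ (γ₂ - 1) = 1 := by
    rw [← ofReal_sub, ← cpow_add _ _ (ofReal_ne_zero.mpr hs.ne'), sub_add_sub_cancel', sub_self,
      cpow_zero]
  have := Gamma_ne_zero_of_re_pos hu
  have := Gamma_ne_zero_of_re_pos hβ₂
  have := Gamma_ne_zero_of_re_pos (hβ₂.trans hγ₂)
  rw [hz]
  field_simp
  rw [mul_assoc _ (_ ^ (1 - γ₂)), hpow, mul_one]

/-- Integral transform relating Gauss' `₂F₁` and Appell's `F₂`. -/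
theorem statement1 (α β₁ β₂ γ₁ γ₂ : ℂ) (A B : ℝ)
    (hβ₁ : 0 < β₁.re) (hγ₁ : β₁.re < γ₁.re)
    (hβ₂ : 0 < β₂.re) (hγ₂ : β₂.re < γ₂.re)
    (hB : 1 < B) (hAB : B < A) :
    (A : ℂ) ^ (-α) *
      appellF2 α β₁ β₂ γ₁ γ₂ (1 / (A : ℂ)) (1 - (B : ℂ) / (A : ℂ)) =
    Complex.Gamma γ₂ * ((A : ℂ) - (B : ℂ)) ^ (1 - γ₂) /
      (Complex.Gamma β₂ * Complex.Gamma (γ₂ - β₂)) *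
    ∫ U in Set.Ioo B A,
      ((A : ℂ) - (U : ℂ)) ^ (β₂ - 1) * ((U : ℂ) - (B : ℂ)) ^ (γ₂ - β₂ - 1) *
      (U : ℂ) ^ (-α) * hyp2F1 α β₁ γ₁ (1 / (U : ℂ)) :=
  statement1_general α β₁ β₂ γ₁ γ₂ A B hβ₂ hγ₂ hB hAB
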